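/- Let M, T, and L be natural numbers, let u, v : {1,…,L} → ℂ^M, define the M×M complex matrix W by W_{ik} = Σ_{s=1}^L u^{(s)}_i·v^{(s)}_k, and let r, c : {1,…,T} → {1,…,M} be arbitrary functions. Then Σ_{σ ∈ S_T} ∏_{t=1}^T W_{r(t), c(σ(t))} = Σ_{p : {1,…,L} → ℕ} ( ∏_{s=1}^L p_s! ) · [coefficient of ∏_{s=1}^L α_s^{p_s} in ∏_{t=1}^T ( Σ_{s=1}^L u^{(s)}_{r(t)}·α_s ) ∈ ℂ[α_1,…,α_L]] · [coefficient of ∏_{s=1}^L β_s^{p_s} in ∏_{t=1}^T ( Σ_{s=1}^L v^{(s)}_{c(t)}·β_s ) ∈ ℂ[β_1,…,β_L]]. -/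

import Mathlib

set_option linter.unusedSectionVars false
open Finset MvPolynomial


/-- product of monomials is a monomial -/
lemma prod_monomial {ι σ R : Type*} [CommSemiring R] (s : Finset ι)
    (d : ι → (σ →₀ ℕ)) (b : ι → R) :
    ∏ i ∈ s, monomial (d i) (b i) = monomial (∑ i ∈ s, d i) (∏ i ∈ s, b i) := by
  classical
  induction s using Finset.induction with
  | empty => simp [monomial_zero', MvPolynomial.C_1]
  | insert _ _ h ih => simp [Finset.prod_insert h, Finset.sum_insert h, ih, monomial_mul]

noncomputable def cnt {T L : ℕ} (f : Fin T → Fin L) : Fin L →₀ ℕ :=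
  ∑ t, Finsupp.single (f t) 1

lemma coeff_prod_linear {T L : ℕ} (a : Fin T → Fin L → ℂ) (m : Fin L →₀ ℕ) :
    coeff m (∏ t : Fin T, ∑ s : Fin L, C (a t s) * X s) =
      ∑ f : Fin T → Fin L, if cnt f = m then ∏ t, a t (f t) else 0 := by
  classical
  rw [Finset.prod_univ_sum (fun _ => (univ : Finset (Fin L)))
      (fun t s => C (a t s) * X s), Fintype.piFinset_univ, coeff_sum]
  refine Finset.sum_congr rfl fun f _ => ?_
  have : ∏ t : Fin T, C (a t (f t)) * X (f t) =
      monomial (cnt f) (∏ t, a t (f t)) := by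
    simp_rw [C_mul_X_eq_monomial]
    rw [prod_monomial]; rfl
  rw [this, coeff_monomial]

lemma cnt_apply {T L : ℕ} (f : Fin T → Fin L) (s : Fin L) :
    cnt f s = Fintype.card {t // f t = s} := by
  classical
  rw [cnt, Finsupp.finset_sum_apply, Fintype.card_subtype]
  simp [Finsupp.single_apply, eq_comm]


section
variable {α β : Type*} [DecidableEq β] (f g : α → β)

private lemma cast_aux (F : ∀ b, {x // g x = b} ≃ {x // f x = b}) {a : α} {b : β}
    (h : g a = b) : ((F (g a)) ⟨a, rfl⟩ : Subtype _).1 = ((F b) ⟨a, h⟩).1 := by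
  subst h; rfl

private lemma cast_aux2 (F : ∀ b, {x // g x = b} ≃ {x // f x = b}) {a : α} {b : β}
    (h : f a = b) : ((F (f a)).symm ⟨a, rfl⟩ : Subtype _).1 = ((F b).symm ⟨a, h⟩).1 := by
  subst h; rfl

/-- bijectivity of fiberwise-built map -/
noncomputable def permOfFiberEquivs (F : ∀ b, {x // g x = b} ≃ {x // f x = b}) :
    Equiv.Perm α := by
  refine Equiv.ofBijective (fun a => ((F (g a)) ⟨a, rfl⟩).1) ⟨?_, ?_⟩
  · intro a a' h
    dsimp only at h
    have hfa : f ((F (g a) ⟨a, rfl⟩).1) = g a := (F (g a) ⟨a, rfl⟩).2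
    have hfa' : f ((F (g a') ⟨a', rfl⟩).1) = g a' := (F (g a') ⟨a', rfl⟩).2
    have hb : g a = g a' := by rw [← hfa, ← hfa', h]
    have h2 : ((F (g a)) ⟨a, rfl⟩).1 = ((F (g a)) ⟨a', hb.symm⟩).1 := by
      rw [h, cast_aux f g F hb.symm]
    have := (F (g a)).injective (Subtype.ext h2)
    exact congrArg Subtype.val this
  · intro y
    refine ⟨((F (f y)).symm ⟨y, rfl⟩).1, ?_⟩
    dsimp only
    have hx : g (((F (f y)).symm ⟨y, rfl⟩).1) = f y := ((F (f y)).symm ⟨y, rfl⟩).2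
    rw [cast_aux f g F hx]
    have : (⟨((F (f y)).symm ⟨y, rfl⟩).1, hx⟩ : {x // g x = f y}) =
        (F (f y)).symm ⟨y, rfl⟩ := by apply Subtype.ext; rfl
    rw [this, (F (f y)).apply_symm_apply]

lemma permOfFiberEquivs_comp (F : ∀ b, {x // g x = b} ≃ {x // f x = b}) :
    f ∘ (permOfFiberEquivs f g F) = g := by
  funext a
  exact ((F (g a)) ⟨a, rfl⟩).2

/-- The set of permutations intertwining `f` and `g` is equivalent to fiberwise equivs. -/
noncomputable def permCompEquiv :
    {σ : Equiv.Perm α // f ∘ σ = g} ≃ (∀ b, {x // g x = b} ≃ {x // f x = b}) := by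
  refine Equiv.ofBijective (fun σ b =>
    { toFun := fun x => ⟨σ.1 x.1, by
        have := congrFun σ.2 x.1; simp only [Function.comp_apply] at this
        rw [this, x.2]⟩
      invFun := fun y => ⟨σ.1.symm y.1, by
        have := congrFun σ.2 (σ.1.symm y.1)
        simp only [Function.comp_apply, Equiv.apply_symm_apply] at this
        rw [← this, y.2]⟩
      left_inv := fun x => by apply Subtype.ext; simp
      right_inv := fun y => by apply Subtype.ext; simp }) ⟨?_, ?_⟩
  · intro σ σ' h
    apply Subtype.ext; apply Equiv.ext; intro a
    have := congrFun h (g a)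
    have h2 := congrFun (congrArg DFunLike.coe this) ⟨a, rfl⟩
    exact congrArg Subtype.val h2
  · intro F
    refine ⟨⟨permOfFiberEquivs f g F, permOfFiberEquivs_comp f g F⟩, ?_⟩
    funext b
    apply Equiv.ext; intro x
    apply Subtype.ext
    show ((F (g x.1)) ⟨x.1, rfl⟩).1 = ((F b) x).1
    obtain ⟨a, ha⟩ := x
    exact cast_aux f g F ha

end


lemma card_perm_comp {T L : ℕ} (f g : Fin T → Fin L) :
    Fintype.card {σ : Equiv.Perm (Fin T) // f ∘ ⇑σ = g} =
      if cnt f = cnt g then ∏ s, (cnt f s).factorial else 0 := by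
  classical
  rw [Fintype.card_congr (permCompEquiv f g), Fintype.card_pi]
  by_cases h : cnt f = cnt g
  · rw [if_pos h]
    refine Finset.prod_congr rfl fun s _ => ?_
    have hcard : Fintype.card {x // g x = s} = Fintype.card {x // f x = s} := by
      rw [← cnt_apply, ← cnt_apply, h]
    rw [Fintype.card_equiv (Fintype.equivOfCardEq hcard), hcard, cnt_apply]
  · rw [if_neg h]
    have hex : ∃ s, cnt f s ≠ cnt g s := by
      by_contra hc; push_neg at hc; exact h (Finsupp.ext hc)
    obtain ⟨s, hs⟩ := hex
    refine Finset.prod_eq_zero (Finset.mem_univ s) ?_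
    rw [Fintype.card_eq_zero_iff]
    refine ⟨fun e => hs ?_⟩
    rw [cnt_apply, cnt_apply]
    exact (Fintype.card_congr e).symm

/-- Low-rank permanent evaluation: the permanent of the `T×T` matrix
obtained from the rank-`≤ L` matrix `W i k = ∑_s u s i * v s k` by selecting rows
`r t` and columns `c t` (with repetition) equals the matched-label sum over exponent
vectors `p`, with factorial weights, of products of coefficients of the two
polynomials `∏_t (∑_s u s (r t) α_s)` and `∏_t (∑_s v s (c t) β_s)`. -/
theorem low_rank_permanent_matched_label_identity
    (M T L : ℕ) (u v : Fin L → Fin M → ℂ)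
    (W : Matrix (Fin M) (Fin M) ℂ)
    (hW : ∀ i k, W i k = ∑ s, u s i * v s k)
    (r c : Fin T → Fin M) :
    (∑ σ : Equiv.Perm (Fin T), ∏ t : Fin T, W (r t) (c (σ t))) =
      ∑ᶠ p : Fin L → ℕ, (∏ s : Fin L, ((p s).factorial : ℂ)) *
        MvPolynomial.coeff (Finsupp.equivFunOnFinite.symm p)
          (∏ t : Fin T, ∑ s : Fin L, MvPolynomial.C (u s (r t)) * MvPolynomial.X s) *
        MvPolynomial.coeff (Finsupp.equivFunOnFinite.symm p)
          (∏ t : Fin T, ∑ s : Fin L, MvPolynomial.C (v s (c t)) * MvPolynomial.X s) := by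
  classical
  set U : (Fin T → Fin L) → ℂ := fun f => ∏ t, u (f t) (r t) with hU
  set V : (Fin T → Fin L) → ℂ := fun g => ∏ t, v (g t) (c t) with hV
  -- common form
  have key : ∀ (X : ℂ), X = X := fun _ => rfl
  -- LHS computation
  have lhs_eq : (∑ σ : Equiv.Perm (Fin T), ∏ t : Fin T, W (r t) (c (σ t))) =
      ∑ f : Fin T → Fin L, ∑ g : Fin T → Fin L,
        (if cnt f = cnt g then (∏ s, ((cnt f s).factorial : ℂ)) * (U f * V g) else 0) := by
    have step1 : ∀ σ : Equiv.Perm (Fin T),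
        (∏ t : Fin T, W (r t) (c (σ t))) =
          ∑ f : Fin T → Fin L, U f * ∏ t, v (f t) (c (σ t)) := by
      intro σ
      simp_rw [hW]
      rw [Finset.prod_univ_sum (fun _ => (univ : Finset (Fin L)))
        (fun t s => u s (r t) * v s (c (σ t))), Fintype.piFinset_univ]
      exact Finset.sum_congr rfl fun f _ => by rw [hU, ← Finset.prod_mul_distrib]
    simp_rw [step1]
    rw [Finset.sum_comm]
    refine Finset.sum_congr rfl fun f _ => ?_
    rw [← Finset.mul_sum]
    -- reindex the permutation
    have step2 : ∀ σ : Equiv.Perm (Fin T),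
        (∏ t, v (f t) (c (σ t))) = V (f ∘ ⇑σ⁻¹) := by
      intro σ
      rw [hV]
      have := Equiv.prod_comp σ (fun t => v (f (σ⁻¹ t)) (c t))
      simpa [Function.comp] using this
    simp_rw [step2]
    have step3 : (∑ σ : Equiv.Perm (Fin T), V (f ∘ ⇑σ⁻¹)) =
        ∑ σ : Equiv.Perm (Fin T), V (f ∘ ⇑σ) :=
      Equiv.sum_comp (Equiv.inv (Equiv.Perm (Fin T))) (fun σ => V (f ∘ ⇑σ))
    rw [step3]
    -- group by the composite
    rw [Finset.sum_comp (fun g => V g) (fun σ : Equiv.Perm (Fin T) => f ∘ ⇑σ)]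
    rw [Finset.sum_subset (Finset.subset_univ _) (by
      intro g _ hg
      have : (Finset.univ.filter (fun σ : Equiv.Perm (Fin T) => f ∘ ⇑σ = g)).card = 0 := by
        rw [Finset.card_eq_zero, Finset.filter_eq_empty_iff]
        intro σ _ hσ
        exact hg (Finset.mem_image.mpr ⟨σ, Finset.mem_univ σ, hσ⟩)
      rw [this, zero_smul])]
    rw [Finset.mul_sum]
    refine Finset.sum_congr rfl fun g _ => ?_
    have hcard : (Finset.univ.filter (fun σ : Equiv.Perm (Fin T) => f ∘ ⇑σ = g)).card =
        if cnt f = cnt g then ∏ s, (cnt f s).factorial else 0 := by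
      rw [← Fintype.card_subtype, card_perm_comp]
    rw [hcard, nsmul_eq_mul]
    by_cases h : cnt f = cnt g
    · simp [h, mul_comm, mul_assoc, mul_left_comm]
    · simp [h]
  rw [lhs_eq]
  -- RHS computation
  set P := ∏ t : Fin T, ∑ s : Fin L, MvPolynomial.C (u s (r t)) * MvPolynomial.X s with hP
  set Q := ∏ t : Fin T, ∑ s : Fin L, MvPolynomial.C (v s (c t)) * MvPolynomial.X s with hQ
  set h : (Fin L → ℕ) → ℂ := fun p => (∏ s : Fin L, ((p s).factorial : ℂ)) *
      MvPolynomial.coeff (Finsupp.equivFunOnFinite.symm p) P *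
      MvPolynomial.coeff (Finsupp.equivFunOnFinite.symm p) Q with hh
  set S' : Finset (Fin L →₀ ℕ) := Finset.image cnt Finset.univ with hS'
  have hsupp : Function.support h ⊆ ↑(S'.image ⇑(Finsupp.equivFunOnFinite : (Fin L →₀ ℕ) ≃ (Fin L → ℕ))) := by
    intro p hp
    have hcoeff : MvPolynomial.coeff (Finsupp.equivFunOnFinite.symm p) P ≠ 0 := by
      intro h0
      apply hp
      rw [hh]; simp [h0]
    rw [hP, coeff_prod_linear (fun t s => u s (r t))] at hcoeff
    obtain ⟨f, _, hf⟩ := Finset.exists_ne_zero_of_sum_ne_zero hcoeff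
    have hcnt : cnt f = Finsupp.equivFunOnFinite.symm p := by
      by_contra hc; simp [hc] at hf
    simp only [Finset.coe_image, Set.mem_image, Finset.mem_coe]
    refine ⟨cnt f, Finset.mem_image_of_mem cnt (Finset.mem_univ f), ?_⟩
    rw [hcnt]
    exact Finsupp.equivFunOnFinite.apply_symm_apply p
  rw [finsum_eq_finset_sum_of_support_subset h hsupp,
    Finset.sum_image (fun a _ b _ hab => Finsupp.equivFunOnFinite.injective hab)]
  have hterm : ∀ m : Fin L →₀ ℕ, h (Finsupp.equivFunOnFinite m) =
      (∏ s : Fin L, ((m s).factorial : ℂ)) * MvPolynomial.coeff m P *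
        MvPolynomial.coeff m Q := by
    intro m
    rw [hh]
    simp only [Equiv.symm_apply_apply]
    rfl
  simp_rw [hterm]
  rw [hP, hQ]
  simp_rw [coeff_prod_linear (fun t s => u s (r t)), coeff_prod_linear (fun t s => v s (c t))]
  -- expand and swap
  have expand : ∀ m : Fin L →₀ ℕ,
      (∏ s : Fin L, ((m s).factorial : ℂ)) *
        (∑ f : Fin T → Fin L, if cnt f = m then ∏ t, u (f t) (r t) else 0) *
        (∑ g : Fin T → Fin L, if cnt g = m then ∏ t, v (g t) (c t) else 0) =
      ∑ f : Fin T → Fin L, ∑ g : Fin T → Fin L,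
        (if cnt f = m then (if cnt g = m then
          (∏ s : Fin L, ((m s).factorial : ℂ)) * (U f * V g) else 0) else 0) := by
    intro m
    rw [mul_assoc, Finset.sum_mul_sum, Finset.mul_sum]
    refine Finset.sum_congr rfl fun f _ => ?_
    rw [Finset.mul_sum]
    refine Finset.sum_congr rfl fun g _ => ?_
    by_cases h1 : cnt f = m <;> by_cases h2 : cnt g = m <;>
      simp [h1, h2, hU, hV, mul_assoc, mul_left_comm, mul_comm]
  simp_rw [expand]
  conv_rhs => rw [Finset.sum_comm]
  refine Finset.sum_congr rfl fun f _ => ?_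
  conv_rhs => rw [Finset.sum_comm]
  refine Finset.sum_congr rfl fun g _ => ?_
  have : (∑ m ∈ S', if cnt f = m then (if cnt g = m then
      (∏ s : Fin L, ((m s).factorial : ℂ)) * (U f * V g) else 0) else 0) =
      if cnt f ∈ S' then (if cnt g = cnt f then
        (∏ s : Fin L, (((cnt f) s).factorial : ℂ)) * (U f * V g) else 0) else 0 :=
    Finset.sum_ite_eq S' (cnt f) _
  rw [this, if_pos (Finset.mem_image_of_mem cnt (Finset.mem_univ f))]
  by_cases h12 : cnt f = cnt g
  · rw [if_pos h12, if_pos h12.symm]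
  · rw [if_neg h12, if_neg (fun hc => h12 hc.symm)]
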